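/- For a > 0, the series ∑_{p ∈ 2πℤ³∖{0}} [ √(|p|⁴ + 16πa|p|²) − |p|² − 8πa + (8πa)²/(2|p|²) ] converges absolutely. -/

import Mathlib

open Real

/-- The point `2π v` of the lattice `2πℤ³ ⊂ ℝ³`. -/
noncomputable def latticePt (v : Fin 3 → ℤ) : EuclideanSpace ℝ (Fin 3) :=
  (WithLp.equiv 2 (Fin 3 → ℝ)).symm (fun i => 2 * Real.pi * (v i))

/-- Quantitative Taylor-type bound for the Bogoliubov remainder. -/
lemma sqrt_remainder_bound {x b : ℝ} (hx : 0 < x) (hb : 0 ≤ b) :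
    |Real.sqrt (x ^ 2 + b * x) - x - b / 2 + b ^ 2 / (8 * x)| ≤ b ^ 3 / (16 * x ^ 2) := by
  have hs0 : (0 : ℝ) ≤ Real.sqrt (x ^ 2 + b * x) := Real.sqrt_nonneg _
  have hR : x + b / 2 - b ^ 2 / (8 * x) + b ^ 3 / (16 * x ^ 2)
      = (16 * x ^ 3 + 8 * b * x ^ 2 - 2 * b ^ 2 * x + b ^ 3) / (16 * x ^ 2) := by
    field_simp; ring
  have hR0 : 0 ≤ x + b / 2 - b ^ 2 / (8 * x) + b ^ 3 / (16 * x ^ 2) := by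
    rw [hR]
    apply div_nonneg _ (by positivity)
    nlinarith [mul_nonneg hb (sq_nonneg (b - x)), mul_nonneg hb (sq_nonneg x), pow_pos hx 3]
  -- upper bound on the square root
  have hupper : Real.sqrt (x ^ 2 + b * x)
      ≤ x + b / 2 - b ^ 2 / (8 * x) + b ^ 3 / (16 * x ^ 2) := by
    have hsq : x ^ 2 + b * x
        ≤ (x + b / 2 - b ^ 2 / (8 * x) + b ^ 3 / (16 * x ^ 2)) ^ 2 := by
      have key : (x + b / 2 - b ^ 2 / (8 * x) + b ^ 3 / (16 * x ^ 2)) ^ 2 - (x ^ 2 + b * x)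
          = b ^ 4 * ((b - 2 * x) ^ 2 + 16 * x ^ 2) / (256 * x ^ 4) := by
        field_simp; ring
      nlinarith [div_nonneg (mul_nonneg (pow_nonneg hb 4)
        (by positivity : (0:ℝ) ≤ (b - 2 * x) ^ 2 + 16 * x ^ 2))
        (by positivity : (0:ℝ) ≤ 256 * x ^ 4)]
    calc Real.sqrt (x ^ 2 + b * x)
        ≤ Real.sqrt ((x + b / 2 - b ^ 2 / (8 * x) + b ^ 3 / (16 * x ^ 2)) ^ 2) :=
          Real.sqrt_le_sqrt hsq
      _ = x + b / 2 - b ^ 2 / (8 * x) + b ^ 3 / (16 * x ^ 2) := Real.sqrt_sq hR0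
  -- lower bound on the square root
  have hlower : x + b / 2 - b ^ 2 / (8 * x) ≤ Real.sqrt (x ^ 2 + b * x) := by
    rcases le_or_gt (x + b / 2 - b ^ 2 / (8 * x)) 0 with h | h
    · exact h.trans hs0
    · have h' : b ^ 2 < (x + b / 2) * (8 * x) := by
        have := (div_lt_iff₀ (by positivity : (0:ℝ) < 8 * x)).mp (by linarith : b ^ 2 / (8 * x) < x + b / 2)
        linarith
      have hb8 : b ≤ 8 * x := by nlinarith [sq_nonneg (b - 8 * x), sq_nonneg x]
      have hsq : (x + b / 2 - b ^ 2 / (8 * x)) ^ 2 ≤ x ^ 2 + b * x := by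
        have key : (x ^ 2 + b * x) - (x + b / 2 - b ^ 2 / (8 * x)) ^ 2
            = b ^ 3 * (8 * x - b) / (64 * x ^ 2) := by
          field_simp; ring
        nlinarith [div_nonneg (mul_nonneg (pow_nonneg hb 3) (by linarith : (0:ℝ) ≤ 8 * x - b))
          (by positivity : (0:ℝ) ≤ 64 * x ^ 2)]
      calc x + b / 2 - b ^ 2 / (8 * x)
          = Real.sqrt ((x + b / 2 - b ^ 2 / (8 * x)) ^ 2) := (Real.sqrt_sq h.le).symm
        _ ≤ Real.sqrt (x ^ 2 + b * x) := Real.sqrt_le_sqrt hsq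
  have hbnd : (0:ℝ) ≤ b ^ 3 / (16 * x ^ 2) := by positivity
  rw [abs_le]
  constructor <;> linarith

/-- The one-dimensional summable majorant. -/
noncomputable def majorant1 (n : ℤ) : ℝ := (1 + (n : ℝ) ^ 2) ^ (-(2 : ℝ) / 3)

lemma majorant1_nonneg (n : ℤ) : 0 ≤ majorant1 n :=
  Real.rpow_nonneg (by positivity) _

lemma summable_majorant1 : Summable majorant1 := by
  apply Summable.of_norm_bounded_eventually (g := fun n : ℤ => |(n : ℝ)| ^ (-(4/3) : ℝ))
    (Real.summable_abs_int_rpow (by norm_num))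
  have : {n : ℤ | ¬ ‖majorant1 n‖ ≤ |(n : ℝ)| ^ (-(4/3) : ℝ)} ⊆ {0} := by
    intro n hn
    simp only [Set.mem_setOf_eq] at hn
    by_contra h0
    apply hn
    have hn0 : (n : ℝ) ≠ 0 := by
      simpa using fun h => h0 (by exact_mod_cast h)
    have h1 : ‖majorant1 n‖ = (1 + (n : ℝ) ^ 2) ^ (-(2 : ℝ) / 3) := by
      rw [Real.norm_eq_abs, abs_of_nonneg (majorant1_nonneg n)]; rfl
    have h2 : ((n : ℝ) ^ 2) ^ (-(2 : ℝ) / 3) = |(n : ℝ)| ^ (-(4/3) : ℝ) := by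
      rw [← sq_abs, ← Real.rpow_natCast |(n : ℝ)| 2,
        ← Real.rpow_mul (abs_nonneg _)]
      norm_num
    rw [h1, ← h2]
    apply Real.rpow_le_rpow_of_nonpos (by positivity) (by linarith [sq_nonneg (n : ℝ)])
    norm_num
  exact Set.Finite.subset (Set.finite_singleton 0) this

lemma norm_latticePt_sq (v : Fin 3 → ℤ) :
    ‖latticePt v‖ ^ 2 = 4 * π ^ 2 * (((v 0 : ℝ)) ^ 2 + ((v 1 : ℝ)) ^ 2 + ((v 2 : ℝ)) ^ 2) := by
  have h : ‖latticePt v‖ = Real.sqrt (∑ i, ‖(latticePt v) i‖ ^ 2) :=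
    EuclideanSpace.norm_eq _
  rw [h, Real.sq_sqrt (by positivity)]
  simp only [latticePt, WithLp.equiv_symm_apply, WithLp.ofLp_toLp, Real.norm_eq_abs, sq_abs,
    Fin.sum_univ_three]
  ring

set_option maxHeartbeats 1600000 in
theorem bogoliubov_energy_sum_absolutely_convergent (a : ℝ) (ha : 0 < a) :
    Summable (fun v : {v : Fin 3 → ℤ // v ≠ 0} =>
      |Real.sqrt (‖latticePt v.1‖ ^ 4 + 16 * π * a * ‖latticePt v.1‖ ^ 2)
        - ‖latticePt v.1‖ ^ 2 - 8 * π * a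
        + (8 * π * a) ^ 2 / (2 * ‖latticePt v.1‖ ^ 2)|) := by
  have hπ := Real.pi_pos
  set b : ℝ := 16 * π * a with hb_def
  have hb : 0 ≤ b := by positivity
  set C : ℝ := b ^ 3 / (256 * π ^ 4) * 4 with hC_def
  have hC : 0 ≤ C := by rw [hC_def]; positivity
  have hmaj : Summable (fun v : {v : Fin 3 → ℤ // v ≠ 0} =>
      C * (majorant1 (v.1 0) * (majorant1 (v.1 1) * majorant1 (v.1 2)))) := by
    have h2 : Summable (fun x : ℤ × ℤ => majorant1 x.1 * majorant1 x.2) :=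
      summable_majorant1.mul_of_nonneg summable_majorant1 majorant1_nonneg majorant1_nonneg
    have h3 : Summable (fun x : ℤ × ℤ × ℤ => majorant1 x.1 * (majorant1 x.2.1 * majorant1 x.2.2)) :=
      summable_majorant1.mul_of_nonneg h2 majorant1_nonneg
        (fun x => mul_nonneg (majorant1_nonneg _) (majorant1_nonneg _))
    have hinj : Function.Injective
        (fun v : {v : Fin 3 → ℤ // v ≠ 0} => ((v.1 0, v.1 1, v.1 2) : ℤ × ℤ × ℤ)) := by
      rintro ⟨v, hv⟩ ⟨w, hw⟩ h
      simp only [Prod.mk.injEq] at h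
      refine Subtype.ext (funext fun j => ?_)
      fin_cases j <;> simp [h.1, h.2.1, h.2.2]
    exact (h3.comp_injective hinj).mul_left C
  apply Summable.of_nonneg_of_le (fun v => abs_nonneg _) _ hmaj
  intro w
  obtain ⟨v, hv⟩ := w
  show |Real.sqrt (‖latticePt v‖ ^ 4 + b * ‖latticePt v‖ ^ 2)
        - ‖latticePt v‖ ^ 2 - 8 * π * a
        + (8 * π * a) ^ 2 / (2 * ‖latticePt v‖ ^ 2)|
      ≤ C * (majorant1 (v 0) * (majorant1 (v 1) * majorant1 (v 2)))
  set r : ℝ := ((v 0 : ℝ)) ^ 2 + ((v 1 : ℝ)) ^ 2 + ((v 2 : ℝ)) ^ 2 with hr_def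
  have hr1 : 1 ≤ r := by
    have hex : ∃ i, v i ≠ 0 := by
      by_contra h
      push_neg at h
      exact hv (funext h)
    obtain ⟨i, hi⟩ := hex
    have h1 : (1 : ℝ) ≤ ((v i : ℝ)) ^ 2 := by
      have : (1 : ℤ) ≤ (v i) ^ 2 := by
        rcases lt_or_gt_of_ne hi with h | h <;> nlinarith
      exact_mod_cast this
    have hsum : r = ∑ j, ((v j : ℝ)) ^ 2 := by rw [hr_def, Fin.sum_univ_three]
    have hle : ((v i : ℝ)) ^ 2 ≤ r := by
      rw [hsum]
      exact Finset.single_le_sum (fun j _ => sq_nonneg ((v j : ℝ))) (Finset.mem_univ i)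
    linarith
  have hr0 : 0 < r := by linarith
  set x : ℝ := ‖latticePt v‖ ^ 2 with hx_def
  have hx2 : x = 4 * π ^ 2 * r := by rw [hx_def, norm_latticePt_sq, hr_def]
  have hx : 0 < x := by rw [hx2]; positivity
  have hx4 : ‖latticePt v‖ ^ 4 = x ^ 2 := by rw [hx_def]; ring
  rw [hx4]
  clear_value x
  clear_value b
  clear_value C
  clear_value r
  have hterm : Real.sqrt (x ^ 2 + b * x) - x - 8 * π * a + (8 * π * a) ^ 2 / (2 * x)
      = Real.sqrt (x ^ 2 + b * x) - x - b / 2 + b ^ 2 / (8 * x) := by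
    rw [hb_def]; ring
  rw [hterm]
  refine (sqrt_remainder_bound hx hb).trans ?_
  have hx2' : x ^ 2 = 16 * π ^ 4 * r ^ 2 := by rw [hx2]; ring
  have key : b ^ 3 / (16 * x ^ 2) = b ^ 3 / (256 * π ^ 4) * (1 / r ^ 2) := by
    rw [hx2', show (16:ℝ) * (16 * π ^ 4 * r ^ 2) = 256 * π ^ 4 * r ^ 2 from by ring,
      ← div_div, div_eq_mul_one_div]
  rw [key]
  clear key hx2' hterm hx4 hx hx2 hx_def hmaj
  clear x
  have hprod : (1 + ((v 0 : ℝ)) ^ 2) * (1 + ((v 1 : ℝ)) ^ 2) * (1 + ((v 2 : ℝ)) ^ 2)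
      ≤ 8 * r ^ 3 := by
    have h0 : 1 + ((v 0 : ℝ)) ^ 2 ≤ 2 * r := by
      linarith [hr1, hr_def.le, hr_def.ge, sq_nonneg ((v 1 : ℝ)), sq_nonneg ((v 2 : ℝ))]
    have h1 : 1 + ((v 1 : ℝ)) ^ 2 ≤ 2 * r := by
      linarith [hr1, hr_def.le, hr_def.ge, sq_nonneg ((v 0 : ℝ)), sq_nonneg ((v 2 : ℝ))]
    have h2 : 1 + ((v 2 : ℝ)) ^ 2 ≤ 2 * r := by
      linarith [hr1, hr_def.le, hr_def.ge, sq_nonneg ((v 0 : ℝ)), sq_nonneg ((v 1 : ℝ))]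
    calc (1 + ((v 0 : ℝ)) ^ 2) * (1 + ((v 1 : ℝ)) ^ 2) * (1 + ((v 2 : ℝ)) ^ 2)
        ≤ (2 * r) * (2 * r) * (2 * r) := by
          apply mul_le_mul (mul_le_mul h0 h1 (by positivity) (by positivity)) h2
            (by positivity) (by positivity)
      _ = 8 * r ^ 3 := by ring
  have hrpow : ((1 + ((v 0 : ℝ)) ^ 2) * (1 + ((v 1 : ℝ)) ^ 2) * (1 + ((v 2 : ℝ)) ^ 2))
      ^ ((2:ℝ)/3) ≤ 4 * r ^ 2 := by
    have h1 : ((1 + ((v 0 : ℝ)) ^ 2) * (1 + ((v 1 : ℝ)) ^ 2) * (1 + ((v 2 : ℝ)) ^ 2))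
        ^ ((2:ℝ)/3) ≤ (8 * r ^ 3) ^ ((2:ℝ)/3) :=
      Real.rpow_le_rpow (by positivity) hprod (by norm_num)
    have h2 : (8 * r ^ 3) ^ ((2:ℝ)/3) = 4 * r ^ 2 := by
      rw [Real.mul_rpow (by norm_num) (by positivity)]
      congr 1
      · rw [show (8:ℝ) = 2 ^ (3:ℕ) by norm_num, ← Real.rpow_natCast 2 3,
          ← Real.rpow_mul (by norm_num)]
        norm_num
      · rw [← Real.rpow_natCast r 3, ← Real.rpow_mul hr0.le,
          show (3:ℕ) * ((2:ℝ)/3) = ((2:ℕ):ℝ) by norm_num, Real.rpow_natCast]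
    linarith [h1, h2.le]
  have hfinal : 1 / r ^ 2 ≤ 4 * (majorant1 (v 0) * (majorant1 (v 1) * majorant1 (v 2))) := by
    have hP : 0 < (1 + ((v 0 : ℝ)) ^ 2) * (1 + ((v 1 : ℝ)) ^ 2) * (1 + ((v 2 : ℝ)) ^ 2) := by
      positivity
    have hm : majorant1 (v 0) * (majorant1 (v 1) * majorant1 (v 2))
        = (((1 + ((v 0 : ℝ)) ^ 2) * (1 + ((v 1 : ℝ)) ^ 2) * (1 + ((v 2 : ℝ)) ^ 2))
          ^ ((2:ℝ)/3))⁻¹ := by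
      unfold majorant1
      rw [Real.mul_rpow (by positivity) (by positivity),
        Real.mul_rpow (by positivity) (by positivity)]
      rw [show (-(2:ℝ)/3) = -((2:ℝ)/3) by norm_num]
      rw [Real.rpow_neg (by positivity), Real.rpow_neg (by positivity),
        Real.rpow_neg (by positivity)]
      rw [mul_inv, mul_inv]
      ring
    rw [hm, ← div_eq_mul_inv,
      div_le_div_iff₀ (by positivity) (Real.rpow_pos_of_pos hP _), one_mul]
    exact hrpow
  calc b ^ 3 / (256 * π ^ 4) * (1 / r ^ 2)
      ≤ b ^ 3 / (256 * π ^ 4) * (4 * (majorant1 (v 0) * (majorant1 (v 1) * majorant1 (v 2)))) := by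
        apply mul_le_mul_of_nonneg_left hfinal (by positivity)
    _ = C * (majorant1 (v 0) * (majorant1 (v 1) * majorant1 (v 2))) := by
        rw [hC_def]; ring
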